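/- Let (A,B) be a nonempty, weakly compact, convex pair of subsets of a normed linear space X, and T : (A×B) ∪ (B×A) → A ∪ B a p-cyclic Kannan nonexpansive mapping. Suppose that ‖(T(x,y), T(y,x)) − (T(T(x,y), T(y,x)), T(T(y,x), T(x,y)))‖ < ‖(x,y) − (T(x,y), T(y,x))‖ whenever dist(A,B) < ‖(x,y) − (T(x,y), T(y,x))‖. Then T has a coupled best proximity point. -/

import Mathlib

/-! With `D(x, y) = ‖(x, y) - (T(x, y), T(y, x))‖`, which is symmetric in `x, y`, the Kannan
inequality bounds the distance from `(T(x, y), T(y, x))` to `(T(p, q), T(q, p))` by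
`(D(x, y) + D(p, q)) / 2` for `(x, y) ∈ A × B`, `(p, q) ∈ B × A`. Along a sequence minimizing `D`
on `A × B`, with infimum `r`, take a weak cluster point `(p, q) ∈ B × A` of these images: closed
balls are weakly closed, so `D(p, q) ≤ (r + D(p, q)) / 2` and `(q, p)` minimizes `D`. If
`r > dist(A, B)`, the contractivity hypothesis at `(q, p)` yields a point of `A × B` with
displacement below `r`; hence `r = dist(A, B)`. -/

open Filter Topology

/-- `setDist A B = inf {‖a - b‖ : a ∈ A, b ∈ B}`. -/
noncomputable def setDist {X : Type*} [NormedAddCommGroup X] (A B : Set X) : ℝ :=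
  sInf {d : ℝ | ∃ a ∈ A, ∃ b ∈ B, d = ‖a - b‖}

theorem setDist_le_norm_sub {X : Type*} [NormedAddCommGroup X] {A B : Set X} {a b : X}
    (ha : a ∈ A) (hb : b ∈ B) : setDist A B ≤ ‖a - b‖ :=
  csInf_le ⟨0, by rintro _ ⟨a, -, b, -, rfl⟩; exact norm_nonneg _⟩ ⟨a, ha, b, hb, rfl⟩

section WeakTopology

variable {X : Type*} [NormedAddCommGroup X] [NormedSpace ℝ X]

theorem isClosed_toWeakSpace_closedBall (v : X) (c : ℝ) :
    IsClosed (toWeakSpace ℝ X '' Metric.closedBall v c) := by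
  rw [← Metric.isClosed_closedBall.closure_eq, (convex_closedBall v c).toWeakSpace_closure ℝ]
  exact isClosed_closure

theorem norm_sub_le_of_mapClusterPt_toWeakSpace {ι : Type*} {l : Filter ι} {u : ι → X}
    {c : ι → ℝ} {p v : X} {c₀ : ℝ} (hp : MapClusterPt (toWeakSpace ℝ X p) l (toWeakSpace ℝ X ∘ u))
    (hu : ∀ᶠ i in l, ‖u i - v‖ ≤ c i) (hc : Tendsto c l (𝓝 c₀)) : ‖p - v‖ ≤ c₀ := by
  refine le_of_forall_pos_le_add fun ε hε => ?_
  have hball : ∀ᶠ i in l,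
      toWeakSpace ℝ X (u i) ∈ toWeakSpace ℝ X '' Metric.closedBall v (c₀ + ε) := by
    filter_upwards [hu, hc.eventually (eventually_le_nhds (lt_add_of_pos_right c₀ hε))]
      with i hui hci
    exact ⟨u i, by rw [Metric.mem_closedBall, dist_eq_norm]; linarith, rfl⟩
  obtain ⟨p', hp', hp'p⟩ :=
    (isClosed_toWeakSpace_closedBall v (c₀ + ε)).mem_of_mapClusterPt hp hball
  rw [(toWeakSpace ℝ X).injective hp'p, Metric.mem_closedBall, dist_eq_norm] at hp'
  exact hp'

end WeakTopology

section CoupledMap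

variable {X : Type*} [NormedAddCommGroup X] {A B : Set X} {T : X → X → X}

def coupledDisplacement (T : X → X → X) (x y : X) : ℝ :=
  ‖((x, y) : X × X) - (T x y, T y x)‖

theorem coupledDisplacement_eq_max (T : X → X → X) (x y : X) :
    coupledDisplacement T x y = max ‖x - T x y‖ ‖y - T y x‖ :=
  rfl

theorem coupledDisplacement_comm (T : X → X → X) (x y : X) :
    coupledDisplacement T x y = coupledDisplacement T y x := by
  rw [coupledDisplacement_eq_max, coupledDisplacement_eq_max, max_comm]

theorem coupledDisplacement_nonneg (T : X → X → X) (x y : X) : 0 ≤ coupledDisplacement T x y :=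
  norm_nonneg _

theorem norm_sub_eq_setDist_of_coupledDisplacement_le
    (hTB : ∀ x ∈ A, ∀ y ∈ B, T x y ∈ B) (hTA : ∀ x ∈ B, ∀ y ∈ A, T x y ∈ A) {x y : X}
    (hx : x ∈ A) (hy : y ∈ B) (h : coupledDisplacement T x y ≤ setDist A B) :
    ‖x - T x y‖ = setDist A B ∧ ‖y - T y x‖ = setDist A B := by
  rw [coupledDisplacement_eq_max, max_le_iff] at h
  refine ⟨h.1.antisymm (setDist_le_norm_sub hx (hTB x hx y hy)), h.2.antisymm ?_⟩
  rw [norm_sub_rev]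
  exact setDist_le_norm_sub (hTA y hy x hx) hy

theorem coupledDisplacement_eq_setDist_of_forall_le
    (hTB : ∀ x ∈ A, ∀ y ∈ B, T x y ∈ B) (hTA : ∀ x ∈ B, ∀ y ∈ A, T x y ∈ A)
    (hcond : ∀ x ∈ A, ∀ y ∈ B, setDist A B < coupledDisplacement T x y →
      coupledDisplacement T (T x y) (T y x) < coupledDisplacement T x y)
    {x y : X} (hx : x ∈ A) (hy : y ∈ B)
    (hmin : ∀ x' ∈ A, ∀ y' ∈ B, coupledDisplacement T x y ≤ coupledDisplacement T x' y') :
    coupledDisplacement T x y = setDist A B := by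
  refine le_antisymm ?_ ((setDist_le_norm_sub hx (hTB x hx y hy)).trans (le_max_left _ _))
  by_contra! hlt
  have hmin' := hmin (T y x) (hTA y hy x hx) (T x y) (hTB x hx y hy)
  rw [coupledDisplacement_comm T (T y x)] at hmin'
  exact (hcond x hx y hy hlt).not_ge hmin'

variable [NormedSpace ℝ X]
  (hAwc : IsCompact (toWeakSpace ℝ X '' A)) (hBwc : IsCompact (toWeakSpace ℝ X '' B))
  (hTB : ∀ x ∈ A, ∀ y ∈ B, T x y ∈ B) (hTA : ∀ x ∈ B, ∀ y ∈ A, T x y ∈ A)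
  (hT : ∀ x₁ ∈ A, ∀ y₁ ∈ B, ∀ x₂ ∈ B, ∀ y₂ ∈ A, ‖T x₁ y₁ - T x₂ y₂‖ ≤
    (1 / 2) * (coupledDisplacement T x₁ y₁ + coupledDisplacement T x₂ y₂))
include hAwc hBwc hTB hTA hT

theorem exists_coupledDisplacement_le_of_tendsto {ι : Type*} {l : Filter ι} [l.NeBot]
    {xs ys : ι → X} (hxs : ∀ i, xs i ∈ A) (hys : ∀ i, ys i ∈ B) {r : ℝ}
    (hr : Tendsto (fun i => coupledDisplacement T (xs i) (ys i)) l (𝓝 r)) :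
    ∃ p ∈ B, ∃ q ∈ A, coupledDisplacement T p q ≤ r := by
  let W : ι → WeakSpace ℝ X × WeakSpace ℝ X := fun i =>
    (toWeakSpace ℝ X (T (xs i) (ys i)), toWeakSpace ℝ X (T (ys i) (xs i)))
  have hWmem : ∀ i, W i ∈ (toWeakSpace ℝ X '' B) ×ˢ (toWeakSpace ℝ X '' A) := fun i =>
    ⟨⟨_, hTB _ (hxs i) _ (hys i), rfl⟩, ⟨_, hTA _ (hys i) _ (hxs i), rfl⟩⟩
  obtain ⟨⟨_, _⟩, ⟨⟨p, hp, rfl⟩, ⟨q, hq, rfl⟩⟩, hclust⟩ :=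
    (hBwc.prod hAwc).exists_mapClusterPt (f := l) (u := W)
      (tendsto_principal.2 (Eventually.of_forall hWmem))
  have hclust_p : MapClusterPt (toWeakSpace ℝ X p) l (Prod.fst ∘ W) :=
    hclust.tendsto_comp (continuous_fst.tendsto _)
  have hclust_q : MapClusterPt (toWeakSpace ℝ X q) l (Prod.snd ∘ W) :=
    hclust.tendsto_comp (continuous_snd.tendsto _)
  have hc : Tendsto (fun i => (1 / 2) * (coupledDisplacement T (xs i) (ys i) +
      coupledDisplacement T p q)) l (𝓝 ((1 / 2) * (r + coupledDisplacement T p q))) :=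
    (hr.add_const _).const_mul _
  have hp' : ‖p - T p q‖ ≤ (1 / 2) * (r + coupledDisplacement T p q) :=
    norm_sub_le_of_mapClusterPt_toWeakSpace hclust_p
      (Eventually.of_forall fun i => hT _ (hxs i) _ (hys i) _ hp _ hq) hc
  have hq' : ‖q - T q p‖ ≤ (1 / 2) * (r + coupledDisplacement T p q) := by
    refine norm_sub_le_of_mapClusterPt_toWeakSpace hclust_q (Eventually.of_forall fun i => ?_) hc
    rw [norm_sub_rev, coupledDisplacement_comm T (xs i), coupledDisplacement_comm T p, add_comm]
    exact hT _ hq _ hp _ (hys i) _ (hxs i)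
  have hpq : coupledDisplacement T p q ≤ (1 / 2) * (r + coupledDisplacement T p q) :=
    max_le hp' hq'
  exact ⟨p, hp, q, hq, by linarith⟩

theorem exists_forall_coupledDisplacement_le (hA : A.Nonempty) (hB : B.Nonempty) :
    ∃ x ∈ A, ∃ y ∈ B, ∀ x' ∈ A, ∀ y' ∈ B,
      coupledDisplacement T x y ≤ coupledDisplacement T x' y' := by
  have hbdd : BddBelow (Set.image2 (coupledDisplacement T) A B) :=
    ⟨0, by rintro _ ⟨x, -, y, -, rfl⟩; exact coupledDisplacement_nonneg T x y⟩
  obtain ⟨u, -, hu, huS⟩ := exists_seq_tendsto_sInf (hA.image2 hB) hbdd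
  choose xs hxs ys hys hxys using huS
  obtain ⟨p, hp, q, hq, hpq⟩ := exists_coupledDisplacement_le_of_tendsto hAwc hBwc hTB hTA hT
    hxs hys (l := atTop) (by simpa only [hxys] using hu)
  refine ⟨q, hq, p, hp, fun x' hx' y' hy' => ?_⟩
  rw [coupledDisplacement_comm]
  exact hpq.trans (csInf_le hbdd (Set.mem_image2_of_mem hx' hy'))

end CoupledMap

theorem stmt13_general {X : Type*} [NormedAddCommGroup X] [NormedSpace ℝ X]
    (A B : Set X) (hA : A.Nonempty) (hB : B.Nonempty)
    (hAwc : IsCompact (toWeakSpace ℝ X '' A)) (hBwc : IsCompact (toWeakSpace ℝ X '' B))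
    (T : X → X → X)
    (hTB : ∀ x ∈ A, ∀ y ∈ B, T x y ∈ B)
    (hTA : ∀ x ∈ B, ∀ y ∈ A, T x y ∈ A)
    (hT : ∀ x₁ ∈ A, ∀ y₁ ∈ B, ∀ x₂ ∈ B, ∀ y₂ ∈ A,
      ‖T x₁ y₁ - T x₂ y₂‖ ≤ (1 / 2) *
        (‖((x₁, y₁) : X × X) - (T x₁ y₁, T y₁ x₁)‖
          + ‖((x₂, y₂) : X × X) - (T x₂ y₂, T y₂ x₂)‖))
    (hcond : ∀ x' ∈ A, ∀ y' ∈ B,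
      setDist A B < ‖((x', y') : X × X) - (T x' y', T y' x')‖ →
      ‖((T x' y', T y' x') : X × X) - (T (T x' y') (T y' x'), T (T y' x') (T x' y'))‖
        < ‖((x', y') : X × X) - (T x' y', T y' x')‖) :
    ∃ x' ∈ A, ∃ y' ∈ B,
      ‖x' - T x' y'‖ = setDist A B ∧ ‖y' - T y' x'‖ = setDist A B := by
  obtain ⟨x, hx, y, hy, hmin⟩ :=
    exists_forall_coupledDisplacement_le hAwc hBwc hTB hTA hT hA hB
  have hxy := coupledDisplacement_eq_setDist_of_forall_le hTB hTA hcond hx hy hmin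
  exact ⟨x, hx, y, hy, norm_sub_eq_setDist_of_coupledDisplacement_le hTB hTA hx hy hxy.le⟩

theorem stmt13 {X : Type*} [NormedAddCommGroup X] [NormedSpace ℝ X]
    (A B : Set X) (hA : A.Nonempty) (hB : B.Nonempty)
    (hAconv : Convex ℝ A) (hBconv : Convex ℝ B)
    (hAwc : IsCompact (toWeakSpace ℝ X '' A)) (hBwc : IsCompact (toWeakSpace ℝ X '' B))
    (T : X → X → X)
    (hTB : ∀ x ∈ A, ∀ y ∈ B, T x y ∈ B)
    (hTA : ∀ x ∈ B, ∀ y ∈ A, T x y ∈ A)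
    (hT : ∀ x₁ ∈ A, ∀ y₁ ∈ B, ∀ x₂ ∈ B, ∀ y₂ ∈ A,
      ‖T x₁ y₁ - T x₂ y₂‖ ≤ (1 / 2) *
        (‖((x₁, y₁) : X × X) - (T x₁ y₁, T y₁ x₁)‖
          + ‖((x₂, y₂) : X × X) - (T x₂ y₂, T y₂ x₂)‖))
    (hcond : ∀ x' ∈ A, ∀ y' ∈ B,
      setDist A B < ‖((x', y') : X × X) - (T x' y', T y' x')‖ →
      ‖((T x' y', T y' x') : X × X) - (T (T x' y') (T y' x'), T (T y' x') (T x' y'))‖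
        < ‖((x', y') : X × X) - (T x' y', T y' x')‖) :
    ∃ x' ∈ A, ∃ y' ∈ B,
      ‖x' - T x' y'‖ = setDist A B ∧ ‖y' - T y' x'‖ = setDist A B :=
  stmt13_general A B hA hB hAwc hBwc T hTB hTA hT hcond
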